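/- arXiv:1702.02888 — 4 statements merged into one kernel-verified Lean document; each statement's English description precedes it below -/
import Mathlib

section
/- Let φ be a proper colouring of the 4-cycle v_1 v_2 v_3 v_4 assigning each vertex an m-element subset of {1,...,3m}, with margin b (i.e., |φ(v_1)\φ(v_3)| ≥ b, |φ(v_2)\φ(v_4)| ≥ b, and 3m − |φ(v_1)∪φ(v_2)∪φ(v_3)∪φ(v_4)| ≥ b). Then there exist pairwise disjoint sets A_1, A_2, A_3, B_1, B_2, B_3, C_1, C_2, C_3 ⊆ {1,...,3m} with |A_1|=|A_2|=|A_3| ≥ b, |B_1|=|B_2|=|B_3| ≥ b, |C_1|=|C_2|=|C_3| ≥ b, and φ(v_1)=A_1∪B_1∪C_1, φ(v_2)=A_2∪B_2∪C_2, φ(v_3)=A_1∪B_3∪C_1, φ(v_4)=A_3∪B_2∪C_2. -/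
set_option linter.all false
set_option linter.unusedVariables false


set_option maxHeartbeats 1000000 in
/-- A `(3m:m)`-colouring of the 4-cycle `v₁v₂v₃v₄` with margin `b`
decomposes into pairwise disjoint pieces `A₁,A₂,A₃,B₁,B₂,B₃,C₁,C₂,C₃`. -/
theorem stmt3 (m b : ℕ) (P₁ P₂ P₃ P₄ : Finset (Fin (3 * m)))
    (hc₁ : P₁.card = m) (hc₂ : P₂.card = m) (hc₃ : P₃.card = m) (hc₄ : P₄.card = m)
    (h12 : Disjoint P₁ P₂) (h23 : Disjoint P₂ P₃) (h34 : Disjoint P₃ P₄)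
    (h41 : Disjoint P₄ P₁)
    (hm13 : b ≤ (P₁ \ P₃).card) (hm24 : b ≤ (P₂ \ P₄).card)
    (hmS : b ≤ 3 * m - (P₁ ∪ P₂ ∪ P₃ ∪ P₄).card) :
    ∃ A₁ A₂ A₃ B₁ B₂ B₃ C₁ C₂ C₃ : Finset (Fin (3 * m)),
      ([A₁, A₂, A₃, B₁, B₂, B₃, C₁, C₂, C₃].Pairwise Disjoint) ∧
      A₁.card = A₂.card ∧ A₂.card = A₃.card ∧ b ≤ A₁.card ∧
      B₁.card = B₂.card ∧ B₂.card = B₃.card ∧ b ≤ B₁.card ∧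
      C₁.card = C₂.card ∧ C₂.card = C₃.card ∧ b ≤ C₁.card ∧
      P₁ = A₁ ∪ B₁ ∪ C₁ ∧ P₂ = A₂ ∪ B₂ ∪ C₂ ∧
      P₃ = A₁ ∪ B₃ ∪ C₁ ∧ P₄ = A₃ ∪ B₂ ∪ C₂ := by
  -- cardinal bookkeeping
  have c1 : (P₁ \ P₃).card + (P₁ ∩ P₃).card = m := by
    have := Finset.card_sdiff_add_card_inter P₁ P₃; omega
  have hswap13 : P₃ ∩ P₁ = P₁ ∩ P₃ := Finset.inter_comm _ _
  have hswap24 : P₄ ∩ P₂ = P₂ ∩ P₄ := Finset.inter_comm _ _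
  have c3 : (P₃ \ P₁).card + (P₁ ∩ P₃).card = m := by
    have := Finset.card_sdiff_add_card_inter P₃ P₁; rw [hswap13] at this; omega
  have c2 : (P₂ \ P₄).card + (P₂ ∩ P₄).card = m := by
    have := Finset.card_sdiff_add_card_inter P₂ P₄; omega
  have c4 : (P₄ \ P₂).card + (P₂ ∩ P₄).card = m := by
    have := Finset.card_sdiff_add_card_inter P₄ P₂; rw [hswap24] at this; omega
  have cu13 : (P₁ ∪ P₃).card + (P₁ ∩ P₃).card = m + m := by
    have := Finset.card_union_add_card_inter P₁ P₃; omega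
  have cu24 : (P₂ ∪ P₄).card + (P₂ ∩ P₄).card = m + m := by
    have := Finset.card_union_add_card_inter P₂ P₄; omega
  have hD : Disjoint (P₁ ∪ P₃) (P₂ ∪ P₄) := by
    rw [Finset.disjoint_union_left, Finset.disjoint_union_right, Finset.disjoint_union_right]
    exact ⟨⟨h12, h41.symm⟩, ⟨h23.symm, h34⟩⟩
  have hUeq : P₁ ∪ P₂ ∪ P₃ ∪ P₄ = (P₁ ∪ P₃) ∪ (P₂ ∪ P₄) := by
    ext x; simp only [Finset.mem_union]; tauto
  have cU : (P₁ ∪ P₂ ∪ P₃ ∪ P₄).card = (P₁ ∪ P₃).card + (P₂ ∪ P₄).card := by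
    rw [hUeq, Finset.card_union_of_disjoint hD]
  have hUle : (P₁ ∪ P₂ ∪ P₃ ∪ P₄).card ≤ 3 * m := by
    simpa using Finset.card_le_univ (P₁ ∪ P₂ ∪ P₃ ∪ P₄)
  -- choose the splittings
  obtain ⟨A₁, hA₁sub, hA₁card⟩ :=
    Finset.exists_subset_card_eq (s := P₁ ∩ P₃) (n := m - (P₂ ∩ P₄).card) (by omega)
  obtain ⟨B₂, hB₂sub, hB₂card⟩ :=
    Finset.exists_subset_card_eq (s := P₂ ∩ P₄) (n := m - (P₁ ∩ P₃).card) (by omega)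
  have hC₁card : ((P₁ ∩ P₃) \ A₁).card = (P₁ ∩ P₃).card - (m - (P₂ ∩ P₄).card) := by
    rw [Finset.card_sdiff_of_subset hA₁sub, hA₁card]
  have hC₂card : ((P₂ ∩ P₄) \ B₂).card = (P₂ ∩ P₄).card - (m - (P₁ ∩ P₃).card) := by
    rw [Finset.card_sdiff_of_subset hB₂sub, hB₂card]
  have hC₃card : (Finset.univ \ (P₁ ∪ P₂ ∪ P₃ ∪ P₄)).card
      = 3 * m - (P₁ ∪ P₂ ∪ P₃ ∪ P₄).card := by
    rw [Finset.card_sdiff_of_subset (Finset.subset_univ _)]; simp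
  have k1 : A₁.card = (P₂ \ P₄).card := by omega
  have k2 : (P₂ \ P₄).card = (P₄ \ P₂).card := by omega
  have k3 : b ≤ A₁.card := by omega
  have k4 : (P₁ \ P₃).card = B₂.card := by omega
  have k5 : B₂.card = (P₃ \ P₁).card := by omega
  have k7 : ((P₁ ∩ P₃) \ A₁).card = ((P₂ ∩ P₄) \ B₂).card := by
    rw [hC₁card, hC₂card]; omega
  have k8 : ((P₂ ∩ P₄) \ B₂).card = (Finset.univ \ (P₁ ∪ P₂ ∪ P₃ ∪ P₄)).card := by
    rw [hC₂card, hC₃card]; omega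
  have k9 : b ≤ ((P₁ ∩ P₃) \ A₁).card := by rw [hC₁card]; omega
  -- subset facts
  have hA₁P₁ : A₁ ⊆ P₁ := hA₁sub.trans Finset.inter_subset_left
  have hA₁P₃ : A₁ ⊆ P₃ := hA₁sub.trans Finset.inter_subset_right
  have hC₁P₁ : (P₁ ∩ P₃) \ A₁ ⊆ P₁ := (Finset.sdiff_subset).trans Finset.inter_subset_left
  have hC₁P₃ : (P₁ ∩ P₃) \ A₁ ⊆ P₃ := (Finset.sdiff_subset).trans Finset.inter_subset_right
  have hB₂P₂ : B₂ ⊆ P₂ := hB₂sub.trans Finset.inter_subset_left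
  have hB₂P₄ : B₂ ⊆ P₄ := hB₂sub.trans Finset.inter_subset_right
  have hC₂P₂ : (P₂ ∩ P₄) \ B₂ ⊆ P₂ := (Finset.sdiff_subset).trans Finset.inter_subset_left
  have hC₂P₄ : (P₂ ∩ P₄) \ B₂ ⊆ P₄ := (Finset.sdiff_subset).trans Finset.inter_subset_right
  have hB₁P₁ : P₁ \ P₃ ⊆ P₁ := Finset.sdiff_subset
  have hB₃P₃ : P₃ \ P₁ ⊆ P₃ := Finset.sdiff_subset
  have hA₂P₂ : P₂ \ P₄ ⊆ P₂ := Finset.sdiff_subset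
  have hA₃P₄ : P₄ \ P₂ ⊆ P₄ := Finset.sdiff_subset
  -- subset-of-U facts
  have s13 : ∀ {X : Finset (Fin (3 * m))}, X ⊆ P₁ → X ⊆ P₁ ∪ P₃ :=
    fun h => h.trans Finset.subset_union_left
  have s13' : ∀ {X : Finset (Fin (3 * m))}, X ⊆ P₃ → X ⊆ P₁ ∪ P₃ :=
    fun h => h.trans Finset.subset_union_right
  have s24 : ∀ {X : Finset (Fin (3 * m))}, X ⊆ P₂ → X ⊆ P₂ ∪ P₄ :=
    fun h => h.trans Finset.subset_union_left
  have s24' : ∀ {X : Finset (Fin (3 * m))}, X ⊆ P₄ → X ⊆ P₂ ∪ P₄ :=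
    fun h => h.trans Finset.subset_union_right
  have cross : ∀ {X Y : Finset (Fin (3 * m))}, X ⊆ P₁ ∪ P₃ → Y ⊆ P₂ ∪ P₄ → Disjoint X Y :=
    fun hX hY => hD.mono hX hY
  have dC₃ : ∀ {X : Finset (Fin (3 * m))}, X ⊆ P₁ ∪ P₃ ∨ X ⊆ P₂ ∪ P₄ →
      Disjoint X (Finset.univ \ (P₁ ∪ P₂ ∪ P₃ ∪ P₄)) := by
    intro X hX
    have hXU : X ⊆ P₁ ∪ P₂ ∪ P₃ ∪ P₄ := by
      rcases hX with h | h
      · rw [hUeq]; exact h.trans Finset.subset_union_left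
      · rw [hUeq]; exact h.trans Finset.subset_union_right
    exact Finset.disjoint_sdiff.mono hXU le_rfl
  -- in-side disjointness
  have dA₁B₁ : Disjoint A₁ (P₁ \ P₃) :=
    (Finset.disjoint_sdiff (s := P₃) (t := P₁)).mono hA₁P₃ le_rfl
  have dA₁B₃ : Disjoint A₁ (P₃ \ P₁) :=
    (Finset.disjoint_sdiff (s := P₁) (t := P₃)).mono hA₁P₁ le_rfl
  have dA₁C₁ : Disjoint A₁ ((P₁ ∩ P₃) \ A₁) := Finset.disjoint_sdiff
  have dB₁B₃ : Disjoint (P₁ \ P₃) (P₃ \ P₁) :=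
    (Finset.sdiff_disjoint (s := P₃) (t := P₁)).mono le_rfl hB₃P₃
  have dB₁C₁ : Disjoint (P₁ \ P₃) ((P₁ ∩ P₃) \ A₁) :=
    (Finset.sdiff_disjoint (s := P₃) (t := P₁)).mono le_rfl hC₁P₃
  have dB₃C₁ : Disjoint (P₃ \ P₁) ((P₁ ∩ P₃) \ A₁) :=
    (Finset.sdiff_disjoint (s := P₁) (t := P₃)).mono le_rfl hC₁P₁
  have dA₂A₃ : Disjoint (P₂ \ P₄) (P₄ \ P₂) :=
    (Finset.sdiff_disjoint (s := P₄) (t := P₂)).mono le_rfl hA₃P₄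
  have dA₂B₂ : Disjoint (P₂ \ P₄) B₂ :=
    (Finset.sdiff_disjoint (s := P₄) (t := P₂)).mono le_rfl hB₂P₄
  have dA₂C₂ : Disjoint (P₂ \ P₄) ((P₂ ∩ P₄) \ B₂) :=
    (Finset.sdiff_disjoint (s := P₄) (t := P₂)).mono le_rfl hC₂P₄
  have dA₃B₂ : Disjoint (P₄ \ P₂) B₂ :=
    (Finset.sdiff_disjoint (s := P₂) (t := P₄)).mono le_rfl hB₂P₂
  have dA₃C₂ : Disjoint (P₄ \ P₂) ((P₂ ∩ P₄) \ B₂) :=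
    (Finset.sdiff_disjoint (s := P₂) (t := P₄)).mono le_rfl hC₂P₂
  have dB₂C₂ : Disjoint B₂ ((P₂ ∩ P₄) \ B₂) := Finset.disjoint_sdiff
  -- the union decompositions
  have hAC : A₁ ∪ ((P₁ ∩ P₃) \ A₁) = P₁ ∩ P₃ := Finset.union_sdiff_of_subset hA₁sub
  have hBC : B₂ ∪ ((P₂ ∩ P₄) \ B₂) = P₂ ∩ P₄ := Finset.union_sdiff_of_subset hB₂sub
  have e1 : P₁ = A₁ ∪ (P₁ \ P₃) ∪ ((P₁ ∩ P₃) \ A₁) := by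
    rw [Finset.union_comm A₁ (P₁ \ P₃), Finset.union_assoc, hAC]
    exact (Finset.sdiff_union_inter P₁ P₃).symm
  have e3 : P₃ = A₁ ∪ (P₃ \ P₁) ∪ ((P₁ ∩ P₃) \ A₁) := by
    rw [Finset.union_comm A₁ (P₃ \ P₁), Finset.union_assoc, hAC, ← hswap13]
    exact (Finset.sdiff_union_inter P₃ P₁).symm
  have e2 : P₂ = (P₂ \ P₄) ∪ B₂ ∪ ((P₂ ∩ P₄) \ B₂) := by
    rw [Finset.union_assoc, hBC]
    exact (Finset.sdiff_union_inter P₂ P₄).symm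
  have e4 : P₄ = (P₄ \ P₂) ∪ B₂ ∪ ((P₂ ∩ P₄) \ B₂) := by
    rw [Finset.union_assoc, hBC, ← hswap24]
    exact (Finset.sdiff_union_inter P₄ P₂).symm
  have hPW : [A₁, P₂ \ P₄, P₄ \ P₂, P₁ \ P₃, B₂, P₃ \ P₁,
      (P₁ ∩ P₃) \ A₁, (P₂ ∩ P₄) \ B₂,
      Finset.univ \ (P₁ ∪ P₂ ∪ P₃ ∪ P₄)].Pairwise Disjoint := by
    simp only [List.pairwise_cons, List.mem_cons, List.not_mem_nil, or_false,
      List.mem_singleton, forall_eq_or_imp, forall_eq, List.Pairwise.nil, and_true]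
    exact ⟨⟨cross (s13 hA₁P₁) (s24 hA₂P₂), cross (s13 hA₁P₁) (s24' hA₃P₄), dA₁B₁,
        cross (s13 hA₁P₁) (s24 hB₂P₂), dA₁B₃, dA₁C₁,
        cross (s13 hA₁P₁) (s24 hC₂P₂), dC₃ (Or.inl (s13 hA₁P₁))⟩,
      ⟨dA₂A₃, (cross (s13 hB₁P₁) (s24 hA₂P₂)).symm, dA₂B₂,
        (cross (s13' hB₃P₃) (s24 hA₂P₂)).symm, (cross (s13 hC₁P₁) (s24 hA₂P₂)).symm,
        dA₂C₂, dC₃ (Or.inr (s24 hA₂P₂))⟩,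
      ⟨(cross (s13 hB₁P₁) (s24' hA₃P₄)).symm, dA₃B₂,
        (cross (s13' hB₃P₃) (s24' hA₃P₄)).symm, (cross (s13 hC₁P₁) (s24' hA₃P₄)).symm,
        dA₃C₂, dC₃ (Or.inr (s24' hA₃P₄))⟩,
      ⟨cross (s13 hB₁P₁) (s24 hB₂P₂), dB₁B₃, dB₁C₁,
        cross (s13 hB₁P₁) (s24 hC₂P₂), dC₃ (Or.inl (s13 hB₁P₁))⟩,
      ⟨(cross (s13' hB₃P₃) (s24 hB₂P₂)).symm, (cross (s13 hC₁P₁) (s24 hB₂P₂)).symm,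
        dB₂C₂, dC₃ (Or.inr (s24 hB₂P₂))⟩,
      ⟨dB₃C₁, cross (s13' hB₃P₃) (s24 hC₂P₂), dC₃ (Or.inl (s13' hB₃P₃))⟩,
      ⟨cross (s13 hC₁P₁) (s24 hC₂P₂), dC₃ (Or.inl (s13 hC₁P₁))⟩,
      dC₃ (Or.inr (s24 hC₂P₂)), fun _ h => h.elim⟩
  exact ⟨A₁, P₂ \ P₄, P₄ \ P₂, P₁ \ P₃, B₂, P₃ \ P₁,
    (P₁ ∩ P₃) \ A₁, (P₂ ∩ P₄) \ B₂, Finset.univ \ (P₁ ∪ P₂ ∪ P₃ ∪ P₄),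
    hPW, k1, k2, k3, k4, k5, hm13, k7, k8, k9, e1, e2, e3, e4⟩
end

section
/- Let T'_n be the reduced Thomas-Walls graph on 3n+1 vertices (for n ≥ 2) and let T denote any reduced Thomas-Walls graph. Then α(T) ≤ (|T|+5)/3. -/
/-- The independence number of a finite simple graph. -/
noncomputable def indepNum {V : Type*} [Fintype V] (G : SimpleGraph V) : ℕ :=
  sSup {n | ∃ s : Finset V, (∀ u ∈ s, ∀ v ∈ s, ¬ G.Adj u v) ∧ s.card = n}

/-- First interface vertex of the `i`-th 4-cycle of a reduced Thomas-Walls graph. -/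
def twX (i : ℕ) : ℕ := if i = 1 then 0 else 3 * i - 2

/-- Second interface vertex of the `i`-th 4-cycle of a reduced Thomas-Walls graph. -/
def twZ (i : ℕ) : ℕ := if i = 1 then 2 else 3 * i - 1

/-- Edge list of the reduced Thomas-Walls graph `T'_n` on vertices `0,…,3n`:
`T'_1` is the 4-cycle `0 1 2 3` with interface pair `(0,2)`; at step `i ≥ 2` the new
4-cycle `v₁v₂v₃v₄ = (3i−2) x_{i−1} (3i−1) (3i)` is added together with the edge
`z_{i−1} (3i)`, the new interface pair being `(3i−2, 3i−1)`. -/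
def twEdgeList (n : ℕ) : List (ℕ × ℕ) :=
  [(0, 1), (1, 2), (2, 3), (3, 0)] ++ (List.range (n - 1)).flatMap fun j =>
    let i := j + 2
    [(3 * i - 2, twX (i - 1)), (twX (i - 1), 3 * i - 1), (3 * i - 1, 3 * i),
     (3 * i, 3 * i - 2), (twZ (i - 1), 3 * i)]

/-- The reduced Thomas-Walls graph `T'_n`, on `3n+1` vertices. -/
def reducedThomasWalls (n : ℕ) : SimpleGraph (Fin (3 * n + 1)) :=
  SimpleGraph.fromRel (fun a b => ((a : ℕ), (b : ℕ)) ∈ twEdgeList n)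

lemma twX_lt (n : ℕ) : twX n < 3*n+1 := by unfold twX; split <;> omega

lemma twZ_lt (n : ℕ) : twZ n < 3*n+1 := by unfold twZ; split <;> omega

lemma rtw_adj (n : ℕ) (a b : Fin (3*n+1)) : (reducedThomasWalls n).Adj a b ↔
    a ≠ b ∧ (((a:ℕ), (b:ℕ)) ∈ twEdgeList n ∨ ((b:ℕ), (a:ℕ)) ∈ twEdgeList n) :=
  SimpleGraph.fromRel_adj _ a b

instance (n : ℕ) : DecidableRel (reducedThomasWalls n).Adj := fun a b =>
  decidable_of_iff _ (rtw_adj n a b).symm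

lemma twEdgeList_succ (n : ℕ) (hn : 1 ≤ n) :
    twEdgeList (n+1) = twEdgeList n ++
      [(3*n+1, twX n), (twX n, 3*n+2), (3*n+2, 3*n+3), (3*n+3, 3*n+1), (twZ n, 3*n+3)] := by
  obtain ⟨m, rfl⟩ := Nat.exists_eq_add_of_le hn
  rw [show 1 + m = m + 1 from by omega]
  simp only [twEdgeList, List.range_succ, List.flatMap_append, List.append_assoc,
    List.flatMap_singleton, show m + 1 + 1 - 1 = m + 1 from rfl, Nat.add_sub_cancel]
  congr 2

lemma key (n : ℕ) (hn : 1 ≤ n) :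
    ∀ s : Finset (Fin (3*n+1)), (∀ u ∈ s, ∀ v ∈ s, ¬ (reducedThomasWalls n).Adj u v) →
    s.card ≤ n + 2 ∧
    ((⟨twX n, twX_lt n⟩ : Fin (3*n+1)) ∉ s → s.card ≤ n+1) ∧
    ((⟨twZ n, twZ_lt n⟩ : Fin (3*n+1)) ∉ s → s.card ≤ n+1) := by
  induction n, hn using Nat.le_induction with
  | base => decide
  | succ n hn ih =>
    intro s hs
    have hle : 3*n+1 ≤ 3*(n+1)+1 := by omega
    set e : Fin (3*n+1) → Fin (3*(n+1)+1) := Fin.castLE hle with he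
    set t : Finset (Fin (3*n+1)) := Finset.univ.filter (fun v => e v ∈ s) with ht
    -- monotonicity of adjacency along the cast
    have hmono : ∀ u v : Fin (3*n+1), (reducedThomasWalls n).Adj u v →
        (reducedThomasWalls (n+1)).Adj (e u) (e v) := by
      intro u v huv
      rw [rtw_adj] at huv ⊢
      obtain ⟨hne, h⟩ := huv
      have hpre : ∀ p ∈ twEdgeList n, p ∈ twEdgeList (n+1) := fun p hp => by
        rw [twEdgeList_succ n hn]; exact List.mem_append_left _ hp
      exact ⟨fun hc => hne (Fin.castLE_injective hle hc), h.imp (hpre _) (hpre _)⟩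
    have hts : ∀ u ∈ t, ∀ v ∈ t, ¬ (reducedThomasWalls n).Adj u v := by
      intro u hu v hv hadj
      rw [ht, Finset.mem_filter] at hu hv
      exact hs _ hu.2 _ hv.2 (hmono u v hadj)
    obtain ⟨h1, h2, h3⟩ := ih t hts
    -- the three top vertices
    obtain ⟨X, hXv⟩ : ∃ X : Fin (3*(n+1)+1), (X:ℕ) = 3*n+1 := ⟨⟨3*n+1, by omega⟩, rfl⟩
    obtain ⟨Z, hZv⟩ : ∃ Z : Fin (3*(n+1)+1), (Z:ℕ) = 3*n+2 := ⟨⟨3*n+2, by omega⟩, rfl⟩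
    obtain ⟨W, hWv⟩ : ∃ W : Fin (3*(n+1)+1), (W:ℕ) = 3*n+3 := ⟨⟨3*n+3, by omega⟩, rfl⟩
    obtain ⟨xlow, hxv⟩ : ∃ x : Fin (3*(n+1)+1), (x:ℕ) = twX n :=
      ⟨⟨twX n, by have := twX_lt n; omega⟩, rfl⟩
    obtain ⟨zlow, hzv⟩ : ∃ z : Fin (3*(n+1)+1), (z:ℕ) = twZ n :=
      ⟨⟨twZ n, by have := twZ_lt n; omega⟩, rfl⟩
    have hex : e ⟨twX n, twX_lt n⟩ = xlow := Fin.ext hxv.symm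
    have hez : e ⟨twZ n, twZ_lt n⟩ = zlow := Fin.ext hzv.symm
    have hxlt : twX n < 3*n+1 := twX_lt n
    have hzlt : twZ n < 3*n+1 := twZ_lt n
    -- adjacency facts
    have hadjgen : ∀ a b : Fin (3*(n+1)+1), (a:ℕ) ≠ (b:ℕ) →
        (((a:ℕ), (b:ℕ)) ∈ twEdgeList (n+1) ∨ ((b:ℕ), (a:ℕ)) ∈ twEdgeList (n+1)) →
        (reducedThomasWalls (n+1)).Adj a b := by
      intro a b hne hm
      rw [rtw_adj]
      exact ⟨fun hc => hne (congrArg Fin.val hc), hm⟩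
    have hblock : ∀ p ∈ [(3*n+1, twX n), (twX n, 3*n+2), (3*n+2, 3*n+3), (3*n+3, 3*n+1),
        (twZ n, 3*n+3)], p ∈ twEdgeList (n+1) := by
      intro p hp
      rw [twEdgeList_succ n hn, List.mem_append]
      exact Or.inr hp
    have hWX : (reducedThomasWalls (n+1)).Adj W X := by
      refine hadjgen W X (by omega) (Or.inl ?_)
      rw [hWv, hXv]; exact hblock _ (by simp)
    have hWZ : (reducedThomasWalls (n+1)).Adj W Z := by
      refine hadjgen W Z (by omega) (Or.inr ?_)
      rw [hWv, hZv]; exact hblock _ (by simp)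
    have hXx : (reducedThomasWalls (n+1)).Adj X xlow := by
      refine hadjgen X xlow (by omega) (Or.inl ?_)
      rw [hXv, hxv]; exact hblock _ (by simp)
    have hZx : (reducedThomasWalls (n+1)).Adj Z xlow := by
      refine hadjgen Z xlow (by omega) (Or.inr ?_)
      rw [hZv, hxv]; exact hblock _ (by simp)
    have hWz : (reducedThomasWalls (n+1)).Adj W zlow := by
      refine hadjgen W zlow (by omega) (Or.inr ?_)
      rw [hWv, hzv]; exact hblock _ (by simp)
    -- cardinality split
    have hinj : Function.Injective e := Fin.castLE_injective hle
    have hsub : s ⊆ t.map ⟨e, hinj⟩ ∪ (({X, Z, W} : Finset _) ∩ s) := by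
      intro a ha
      by_cases hl : (a:ℕ) < 3*n+1
      · apply Finset.mem_union_left
        rw [Finset.mem_map]
        have hae : e ⟨(a:ℕ), hl⟩ = a := Fin.ext rfl
        refine ⟨⟨(a:ℕ), hl⟩, ?_, hae⟩
        rw [ht, Finset.mem_filter]
        exact ⟨Finset.mem_univ _, by rw [hae]; exact ha⟩
      · apply Finset.mem_union_right
        rw [Finset.mem_inter]
        refine ⟨?_, ha⟩
        have hlt := a.isLt
        simp only [Finset.mem_insert, Finset.mem_singleton, Fin.ext_iff, hXv, hZv, hWv]
        omega
    have hcard : s.card ≤ t.card + (({X, Z, W} : Finset _) ∩ s).card := by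
      calc s.card ≤ (t.map ⟨e, hinj⟩ ∪ (({X, Z, W} : Finset _) ∩ s)).card :=
            Finset.card_le_card hsub
        _ ≤ (t.map ⟨e, hinj⟩).card + (({X, Z, W} : Finset _) ∩ s).card :=
            Finset.card_union_le _ _
        _ = t.card + (({X, Z, W} : Finset _) ∩ s).card := by rw [Finset.card_map]
    -- non-membership in t statements
    have hxt : xlow ∉ s → (⟨twX n, twX_lt n⟩ : Fin (3*n+1)) ∉ t := by
      intro h hc; rw [ht, Finset.mem_filter, hex] at hc; exact h hc.2
    have hzt : zlow ∉ s → (⟨twZ n, twZ_lt n⟩ : Fin (3*n+1)) ∉ t := by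
      intro h hc; rw [ht, Finset.mem_filter, hez] at hc; exact h hc.2
    -- identify top interface vertices
    have hX' : (⟨twX (n+1), twX_lt (n+1)⟩ : Fin (3*(n+1)+1)) = X := by
      apply Fin.ext; show twX (n+1) = (X:ℕ); rw [hXv]; unfold twX; split <;> omega
    have hZ' : (⟨twZ (n+1), twZ_lt (n+1)⟩ : Fin (3*(n+1)+1)) = Z := by
      apply Fin.ext; show twZ (n+1) = (Z:ℕ); rw [hZv]; unfold twZ; split <;> omega
    rw [hX', hZ']
    by_cases hWs : W ∈ s
    · have hXs : X ∉ s := fun hXs => hs W hWs X hXs hWX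
      have hZs : Z ∉ s := fun hZs => hs W hWs Z hZs hWZ
      have hzs : zlow ∉ s := fun hzs => hs W hWs zlow hzs hWz
      have ht1 : t.card ≤ n + 1 := h3 (hzt hzs)
      have hint : ({X, Z, W} : Finset _) ∩ s ⊆ {W} := by
        intro a ha
        rw [Finset.mem_inter] at ha
        obtain ⟨ha1, ha2⟩ := ha
        simp only [Finset.mem_insert, Finset.mem_singleton] at ha1 ⊢
        rcases ha1 with rfl | rfl | rfl
        · exact absurd ha2 hXs
        · exact absurd ha2 hZs
        · rfl
      have hic : (({X, Z, W} : Finset _) ∩ s).card ≤ 1 := by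
        calc _ ≤ ({W} : Finset _).card := Finset.card_le_card hint
          _ = 1 := Finset.card_singleton _
      exact ⟨by omega, fun _ => by omega, fun _ => by omega⟩
    · by_cases hXs : X ∈ s
      · have hxs : xlow ∉ s := fun hxs => hs X hXs xlow hxs hXx
        have ht1 : t.card ≤ n + 1 := h2 (hxt hxs)
        have hic : (({X, Z, W} : Finset _) ∩ s).card ≤ 2 := by
          have hint : ({X, Z, W} : Finset _) ∩ s ⊆ {X, Z} := by
            intro a ha
            rw [Finset.mem_inter] at ha
            obtain ⟨ha1, ha2⟩ := ha
            simp only [Finset.mem_insert, Finset.mem_singleton] at ha1 ⊢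
            rcases ha1 with rfl | rfl | rfl
            · exact Or.inl rfl
            · exact Or.inr rfl
            · exact absurd ha2 hWs
          calc _ ≤ ({X, Z} : Finset _).card := Finset.card_le_card hint
            _ ≤ 2 := (Finset.card_insert_le _ _).trans (by simp)
        refine ⟨by omega, fun hc => absurd hXs hc, fun hZs => ?_⟩
        have hint : ({X, Z, W} : Finset _) ∩ s ⊆ {X} := by
          intro a ha
          rw [Finset.mem_inter] at ha
          obtain ⟨ha1, ha2⟩ := ha
          simp only [Finset.mem_insert, Finset.mem_singleton] at ha1 ⊢
          rcases ha1 with rfl | rfl | rfl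
          · rfl
          · exact absurd ha2 hZs
          · exact absurd ha2 hWs
        have hic1 : (({X, Z, W} : Finset _) ∩ s).card ≤ 1 := by
          calc _ ≤ ({X} : Finset _).card := Finset.card_le_card hint
            _ = 1 := Finset.card_singleton _
        omega
      · by_cases hZs : Z ∈ s
        · have hxs : xlow ∉ s := fun hxs => hs Z hZs xlow hxs hZx
          have ht1 : t.card ≤ n + 1 := h2 (hxt hxs)
          have hint : ({X, Z, W} : Finset _) ∩ s ⊆ {Z} := by
            intro a ha
            rw [Finset.mem_inter] at ha
            obtain ⟨ha1, ha2⟩ := ha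
            simp only [Finset.mem_insert, Finset.mem_singleton] at ha1 ⊢
            rcases ha1 with rfl | rfl | rfl
            · exact absurd ha2 hXs
            · rfl
            · exact absurd ha2 hWs
          have hic : (({X, Z, W} : Finset _) ∩ s).card ≤ 1 := by
            calc _ ≤ ({Z} : Finset _).card := Finset.card_le_card hint
              _ = 1 := Finset.card_singleton _
          exact ⟨by omega, fun _ => by omega, fun hc => absurd hZs hc⟩
        · have hint : ({X, Z, W} : Finset _) ∩ s ⊆ ∅ := by
            intro a ha
            rw [Finset.mem_inter] at ha
            obtain ⟨ha1, ha2⟩ := ha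
            simp only [Finset.mem_insert, Finset.mem_singleton] at ha1
            rcases ha1 with rfl | rfl | rfl
            · exact absurd ha2 hXs
            · exact absurd ha2 hZs
            · exact absurd ha2 hWs
          have hic : (({X, Z, W} : Finset _) ∩ s).card = 0 := by
            simpa using Finset.card_le_card hint
          exact ⟨by omega, fun _ => by omega, fun _ => by omega⟩

/-- every reduced Thomas-Walls graph `T` satisfies `α(T) ≤ (|T|+5)/3`. -/
theorem stmt8 (n : ℕ) (hn : 1 ≤ n) :
    3 * indepNum (reducedThomasWalls n) ≤ (3 * n + 1) + 5 := by
  have hile : indepNum (reducedThomasWalls n) ≤ n + 2 := by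
    apply csSup_le'
    rintro m ⟨s, hs, rfl⟩
    exact (key n hn s hs).1
  omega
end

section
/- Let m ≥ 1 and let K = v_1v_2v_3v_4 be a 4-cycle with a (3m:m)-colouring ψ that decomposes as in the decomposition lemma into pieces A_1,A_2,A_3,B_1,B_2,B_3,C_1,C_2,C_3. Given 3-colourings φ_1, φ_2, φ_3 of a graph G ⊇ K extending the three template 3-colourings of K with colour patterns (1,2,1,3), (1,2,3,2), (1,2,1,2) respectively, the map φ(u) = A_{φ_1(u)} ∪ B_{φ_2(u)} ∪ C_{φ_3(u)} is a (3m:m)-colouring of G extending ψ. -/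
/-- given the decomposition `A, B, C : Fin 3 → Finset (Fin 3m)` of a
`(3m:m)`-colouring `ψ` of the 4-cycle `v₁v₂v₃v₄` and three proper 3-colourings
`φ₁, φ₂, φ₃` of `G` extending the template colourings `(1,2,1,3)`, `(1,2,3,2)`,
`(1,2,1,2)` of the 4-cycle, the combined map
`φ(u) = A (φ₁ u) ∪ B (φ₂ u) ∪ C (φ₃ u)` is a `(3m:m)`-colouring of `G` extending `ψ`.
(Colours `1,2,3` are represented by `0,1,2 : Fin 3`.) -/
theorem stmt10 {V : Type*} (G : SimpleGraph V) (m : ℕ) (hm : 1 ≤ m)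
    (v₁ v₂ v₃ v₄ : V)
    (hK : G.Adj v₁ v₂ ∧ G.Adj v₂ v₃ ∧ G.Adj v₃ v₄ ∧ G.Adj v₄ v₁)
    (A B C : Fin 3 → Finset (Fin (3 * m)))
    (hdisj : ∀ i j : Fin 3, Disjoint (A i) (B j) ∧ Disjoint (A i) (C j) ∧
      Disjoint (B i) (C j))
    (hdisjA : ∀ i j : Fin 3, i ≠ j → Disjoint (A i) (A j))
    (hdisjB : ∀ i j : Fin 3, i ≠ j → Disjoint (B i) (B j))
    (hdisjC : ∀ i j : Fin 3, i ≠ j → Disjoint (C i) (C j))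
    (hcardA : ∀ i j : Fin 3, (A i).card = (A j).card)
    (hcardB : ∀ i j : Fin 3, (B i).card = (B j).card)
    (hcardC : ∀ i j : Fin 3, (C i).card = (C j).card)
    (hsum : (A 0).card + (B 0).card + (C 0).card = m)
    (ψ : V → Finset (Fin (3 * m)))
    (hψ₁ : ψ v₁ = A 0 ∪ B 0 ∪ C 0) (hψ₂ : ψ v₂ = A 1 ∪ B 1 ∪ C 1)
    (hψ₃ : ψ v₃ = A 0 ∪ B 2 ∪ C 0) (hψ₄ : ψ v₄ = A 2 ∪ B 1 ∪ C 1)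
    (φ₁ φ₂ φ₃ : V → Fin 3)
    (hp₁ : ∀ u w, G.Adj u w → φ₁ u ≠ φ₁ w)
    (hp₂ : ∀ u w, G.Adj u w → φ₂ u ≠ φ₂ w)
    (hp₃ : ∀ u w, G.Adj u w → φ₃ u ≠ φ₃ w)
    (ht₁ : φ₁ v₁ = 0 ∧ φ₁ v₂ = 1 ∧ φ₁ v₃ = 0 ∧ φ₁ v₄ = 2)
    (ht₂ : φ₂ v₁ = 0 ∧ φ₂ v₂ = 1 ∧ φ₂ v₃ = 2 ∧ φ₂ v₄ = 1)
    (ht₃ : φ₃ v₁ = 0 ∧ φ₃ v₂ = 1 ∧ φ₃ v₃ = 0 ∧ φ₃ v₄ = 1) :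
    (∀ u w, G.Adj u w →
      Disjoint (A (φ₁ u) ∪ B (φ₂ u) ∪ C (φ₃ u)) (A (φ₁ w) ∪ B (φ₂ w) ∪ C (φ₃ w))) ∧
    (∀ u, (A (φ₁ u) ∪ B (φ₂ u) ∪ C (φ₃ u)).card = m) ∧
    (∀ u, u = v₁ ∨ u = v₂ ∨ u = v₃ ∨ u = v₄ →
      A (φ₁ u) ∪ B (φ₂ u) ∪ C (φ₃ u) = ψ u) := by

  obtain ⟨ht11, ht12, ht13, ht14⟩ := ht₁
  obtain ⟨ht21, ht22, ht23, ht24⟩ := ht₂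
  obtain ⟨ht31, ht32, ht33, ht34⟩ := ht₃
  refine ⟨?_, ?_, ?_⟩
  · intro u w huw
    have h1 := hdisjA _ _ (hp₁ u w huw)
    have h2 := hdisjB _ _ (hp₂ u w huw)
    have h3 := hdisjC _ _ (hp₃ u w huw)
    simp only [Finset.disjoint_union_left, Finset.disjoint_union_right]
    repeat' apply And.intro
    all_goals
      first
      | exact h1 | exact h2 | exact h3
      | exact (hdisj _ _).1 | exact (hdisj _ _).1.symm
      | exact (hdisj _ _).2.1 | exact (hdisj _ _).2.1.symm
      | exact (hdisj _ _).2.2 | exact (hdisj _ _).2.2.symm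
  · intro u
    rw [Finset.card_union_of_disjoint, Finset.card_union_of_disjoint]
    · rw [hcardA (φ₁ u) 0, hcardB (φ₂ u) 0, hcardC (φ₃ u) 0]; exact hsum
    · exact (hdisj _ _).1
    · simp only [Finset.disjoint_union_left]
      exact ⟨(hdisj _ _).2.1, (hdisj _ _).2.2⟩
  · rintro u (rfl | rfl | rfl | rfl)
    · rw [ht11, ht21, ht31, hψ₁]
    · rw [ht12, ht22, ht32, hψ₂]
    · rw [ht13, ht23, ht33, hψ₃]
    · rw [ht14, ht24, ht34, hψ₄]
end

section
/- Every reduced Thomas-Walls graph T'_n has four proper 3-colourings φ_1, φ_2, φ_3, φ_4 such that in the 4-cycle u_1u_2u_3u_4 with interface pair u_1u_3, two of the colourings assign different colours to u_1 and u_3, and the other two assign different colours to u_2 and u_4. -/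
/-- Colour table (period 6) for the first pair of colourings. -/
def tpsi (v : ℕ) : Fin 3 :=
  if v % 6 = 2 ∨ v % 6 = 5 then 2 else if v % 6 = 3 ∨ v % 6 = 4 then 1 else 0

/-- A proper 3-colouring of `T'_n` separating the last interface pair `u₁, u₃`. -/
def psi (v : ℕ) : Fin 3 := if v = 1 then 1 else tpsi v

/-- Colour table (period 6) for the second pair of colourings. -/
def tphi (v : ℕ) : Fin 3 :=
  if v % 6 = 0 ∨ v % 6 = 3 then 2 else if v % 6 = 4 ∨ v % 6 = 5 then 1 else 0

/-- A proper 3-colouring of `T'_n` separating `u₂, u₄`. -/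
def phi (v : ℕ) : Fin 3 :=
  if v = 0 then 0 else if v = 1 then 1 else if v = 2 then 0 else if v = 3 then 2 else tphi v

lemma phi_big (v : ℕ) (h : 4 ≤ v) : phi v = tphi v := by
  rw [phi, if_neg (by omega), if_neg (by omega), if_neg (by omega), if_neg (by omega)]

lemma edge_psi {n a b : ℕ} (h : (a, b) ∈ twEdgeList n) : psi a ≠ psi b := by
  simp only [twEdgeList, List.mem_append, List.mem_cons, List.mem_flatMap, List.mem_range,
    List.not_mem_nil, or_false, Prod.mk.injEq] at h
  rcases h with h | ⟨j, hj, h⟩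
  · rcases h with ⟨rfl, rfl⟩ | ⟨rfl, rfl⟩ | ⟨rfl, rfl⟩ | ⟨rfl, rfl⟩ <;> decide
  · rcases j with _ | k
    · simp only [twX, twZ, Prod.mk.injEq] at h
      rcases h with ⟨rfl, rfl⟩ | ⟨rfl, rfl⟩ | ⟨rfl, rfl⟩ | ⟨rfl, rfl⟩ | ⟨rfl, rfl⟩ <;>
        (simp only [psi, tpsi]; split_ifs <;> first | omega | decide | tauto)
    · have hk : ¬ (k + 1 + 2 - 1 = 1) := by omega
      simp only [twX, twZ, if_neg hk, Prod.mk.injEq] at h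
      rcases h with ⟨rfl, rfl⟩ | ⟨rfl, rfl⟩ | ⟨rfl, rfl⟩ | ⟨rfl, rfl⟩ | ⟨rfl, rfl⟩ <;>
        (simp only [psi, tpsi]; split_ifs <;> first | omega | decide | tauto)

lemma edge_phi {n a b : ℕ} (h : (a, b) ∈ twEdgeList n) : phi a ≠ phi b := by
  simp only [twEdgeList, List.mem_append, List.mem_cons, List.mem_flatMap, List.mem_range,
    List.not_mem_nil, or_false, Prod.mk.injEq] at h
  rcases h with h | ⟨j, hj, h⟩
  · rcases h with ⟨rfl, rfl⟩ | ⟨rfl, rfl⟩ | ⟨rfl, rfl⟩ | ⟨rfl, rfl⟩ <;> decide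
  · rcases j with _ | k
    · simp only [twX, twZ, Prod.mk.injEq] at h
      rcases h with ⟨rfl, rfl⟩ | ⟨rfl, rfl⟩ | ⟨rfl, rfl⟩ | ⟨rfl, rfl⟩ | ⟨rfl, rfl⟩ <;> decide
    · have hk : ¬ (k + 1 + 2 - 1 = 1) := by omega
      simp only [twX, twZ, if_neg hk, Prod.mk.injEq] at h
      rcases h with ⟨rfl, rfl⟩ | ⟨rfl, rfl⟩ | ⟨rfl, rfl⟩ | ⟨rfl, rfl⟩ | ⟨rfl, rfl⟩ <;>
        (rw [phi_big _ (by omega), phi_big _ (by omega)]; simp only [tphi];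
          split_ifs <;> first | omega | decide | tauto)

lemma psi_proper {n : ℕ} (a b : Fin (3 * n + 1)) (h : (reducedThomasWalls n).Adj a b) :
    psi a ≠ psi b := by
  rw [reducedThomasWalls, SimpleGraph.fromRel_adj] at h
  rcases h with ⟨-, h | h⟩
  · exact edge_psi h
  · exact (edge_psi h).symm

lemma phi_proper {n : ℕ} (a b : Fin (3 * n + 1)) (h : (reducedThomasWalls n).Adj a b) :
    phi a ≠ phi b := by
  rw [reducedThomasWalls, SimpleGraph.fromRel_adj] at h
  rcases h with ⟨-, h | h⟩
  · exact edge_phi h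
  · exact (edge_phi h).symm

/-- every reduced Thomas-Walls graph `T'_n` has four proper 3-colourings
`φ₁, φ₂, φ₃, φ₄` such that, in the last 4-cycle `u₁u₂u₃u₄` with interface pair `u₁u₃`,
two of the colourings give `u₁` and `u₃` different colours and the other two give `u₂`
and `u₄` different colours. -/
theorem stmt12 (n : ℕ) (hn : 1 ≤ n) (u₁ u₂ u₃ u₄ : Fin (3 * n + 1))
    (hu : ((u₁ : ℕ), (u₂ : ℕ), (u₃ : ℕ), (u₄ : ℕ)) =
      if n = 1 then (0, 1, 2, 3) else (3 * n - 2, 3 * n - 5, 3 * n - 1, 3 * n)) :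
    ∃ φ₁ φ₂ φ₃ φ₄ : Fin (3 * n + 1) → Fin 3,
      (∀ a b, (reducedThomasWalls n).Adj a b → φ₁ a ≠ φ₁ b) ∧
      (∀ a b, (reducedThomasWalls n).Adj a b → φ₂ a ≠ φ₂ b) ∧
      (∀ a b, (reducedThomasWalls n).Adj a b → φ₃ a ≠ φ₃ b) ∧
      (∀ a b, (reducedThomasWalls n).Adj a b → φ₄ a ≠ φ₄ b) ∧
      φ₁ u₁ ≠ φ₁ u₃ ∧ φ₂ u₁ ≠ φ₂ u₃ ∧ φ₃ u₂ ≠ φ₃ u₄ ∧ φ₄ u₂ ≠ φ₄ u₄ := by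
  refine ⟨fun v => psi v, fun v => psi v, fun v => phi v, fun v => phi v,
    psi_proper, psi_proper, phi_proper, phi_proper, ?_, ?_, ?_, ?_⟩
  case _ | _ =>
    by_cases h1 : n = 1
    · simp only [h1, if_pos, Prod.mk.injEq] at hu
      obtain ⟨e1, e2, e3, e4⟩ := hu
      simp only [e1, e3]
      decide
    · obtain ⟨m, rfl⟩ : ∃ m, n = m + 2 := ⟨n - 2, by omega⟩
      simp only [if_neg h1, Prod.mk.injEq] at hu
      obtain ⟨e1, e2, e3, e4⟩ := hu
      have f1 : (u₁ : ℕ) = 3 * m + 4 := by omega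
      have f3 : (u₃ : ℕ) = 3 * m + 5 := by omega
      simp only [f1, f3, psi, tpsi]
      split_ifs <;> first | omega | decide | tauto
  case _ | _ =>
    by_cases h1 : n = 1
    · simp only [h1, if_pos, Prod.mk.injEq] at hu
      obtain ⟨e1, e2, e3, e4⟩ := hu
      simp only [e2, e4]
      decide
    · obtain ⟨m, rfl⟩ : ∃ m, n = m + 2 := ⟨n - 2, by omega⟩
      simp only [if_neg h1, Prod.mk.injEq] at hu
      obtain ⟨e1, e2, e3, e4⟩ := hu
      have f2 : (u₂ : ℕ) = 3 * m + 1 := by omega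
      have f4 : (u₄ : ℕ) = 3 * m + 6 := by omega
      rcases Nat.eq_zero_or_pos m with rfl | hm
      · have g2 : (u₂ : ℕ) = 1 := by omega
        have g4 : (u₄ : ℕ) = 6 := by omega
        simp only [g2, g4]
        decide
      · simp only [f2, f4]
        rw [phi_big _ (by omega), phi_big _ (by omega)]
        simp only [tphi]
        split_ifs <;> first | omega | decide | tauto
end
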